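/- arXiv:math/0308221 — 11 statements merged into one kernel-verified Lean document; each statement's English description precedes it below -/
import Mathlib

section
/- For any matrices M₁, M₂, M₃ ∈ SL(2,ℂ) one has the trace identity Tr(M₂⁻¹M₃M₂M₁) = Tr(M₂)·Tr(M₃M₂M₁) + Tr(M₁)·Tr(M₃) − Tr(M₁M₃) − Tr(M₁M₂)·Tr(M₂M₃). -/
/-!
Everything follows from cyclicity of the trace and the SL(2) relation
`tr (A B⁻¹) = tr A · tr B - tr (A B)`, which is Cayley–Hamilton in the form
`B⁻¹ = adj B = tr B • 1 - B`. Applied to `(M₃M₂M₁, M₂)` it turns the left side into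
`tr M₂ · m₃₂₁ - tr (M₁M₂ · M₃M₂)`; applied to `(M₁M₂, M₃M₂)` and then to `(M₁, M₃)` it expands
the last trace as `m₁₂ m₂₃ - tr M₁ · tr M₃ + m₁₃`.
-/

open Matrix

theorem Matrix.trace_mul_adjugate_fin_two {R : Type*} [CommRing R]
    (A B : Matrix (Fin 2) (Fin 2) R) :
    (A * B.adjugate).trace = A.trace * B.trace - (A * B).trace := by
  simp only [adjugate_fin_two, trace_fin_two, mul_apply, Fin.sum_univ_two, of_apply, cons_val',
    cons_val_zero, cons_val_one, empty_val', cons_val_fin_one]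
  ring

namespace Matrix.SpecialLinearGroup

variable {R : Type*} [CommRing R] (A B : SpecialLinearGroup (Fin 2) R)

theorem trace_mul_comm :
    ((A * B : SpecialLinearGroup (Fin 2) R) : Matrix (Fin 2) (Fin 2) R).trace =
      ((B * A : SpecialLinearGroup (Fin 2) R) : Matrix (Fin 2) (Fin 2) R).trace := by
  simp only [coe_mul, Matrix.trace_mul_comm (A : Matrix (Fin 2) (Fin 2) R)]

theorem trace_mul_inv_fin_two :
    ((A * B⁻¹ : SpecialLinearGroup (Fin 2) R) : Matrix (Fin 2) (Fin 2) R).trace =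
      (A : Matrix (Fin 2) (Fin 2) R).trace * (B : Matrix (Fin 2) (Fin 2) R).trace -
        ((A * B : SpecialLinearGroup (Fin 2) R) : Matrix (Fin 2) (Fin 2) R).trace := by
  rw [coe_mul, coe_inv, trace_mul_adjugate_fin_two, coe_mul]

end Matrix.SpecialLinearGroup

open scoped MatrixGroups

local notation "tr " A:max => Matrix.trace ((A : SL(2, ℂ)) : Matrix (Fin 2) (Fin 2) ℂ)

/-- For matrices `M₁ M₂ M₃ ∈ SL(2,ℂ)`:
`Tr(M₂⁻¹M₃M₂M₁) = Tr(M₂)Tr(M₃M₂M₁) + Tr(M₁)Tr(M₃) − Tr(M₁M₃) − Tr(M₁M₂)Tr(M₂M₃)`. -/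
theorem stmt0 (M₁ M₂ M₃ : Matrix.SpecialLinearGroup (Fin 2) ℂ) :
    ((M₂⁻¹ * M₃ * M₂ * M₁ : Matrix.SpecialLinearGroup (Fin 2) ℂ) : Matrix (Fin 2) (Fin 2) ℂ).trace =
      ((M₂ : Matrix (Fin 2) (Fin 2) ℂ)).trace *
        ((M₃ * M₂ * M₁ : Matrix.SpecialLinearGroup (Fin 2) ℂ) : Matrix (Fin 2) (Fin 2) ℂ).trace
      + ((M₁ : Matrix (Fin 2) (Fin 2) ℂ)).trace * ((M₃ : Matrix (Fin 2) (Fin 2) ℂ)).trace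
      - ((M₁ * M₃ : Matrix.SpecialLinearGroup (Fin 2) ℂ) : Matrix (Fin 2) (Fin 2) ℂ).trace
      - ((M₁ * M₂ : Matrix.SpecialLinearGroup (Fin 2) ℂ) : Matrix (Fin 2) (Fin 2) ℂ).trace *
        ((M₂ * M₃ : Matrix.SpecialLinearGroup (Fin 2) ℂ) : Matrix (Fin 2) (Fin 2) ℂ).trace := by
  have conj : tr (M₂⁻¹ * M₃ * M₂ * M₁) = tr (M₃ * M₂ * M₁ * M₂⁻¹) := by
    rw [show M₂⁻¹ * M₃ * M₂ * M₁ = M₂⁻¹ * (M₃ * M₂ * M₁) by group,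
      SpecialLinearGroup.trace_mul_comm]
  have cyc : tr (M₃ * M₂ * M₁ * M₂) = tr (M₁ * M₂ * (M₃ * M₂)) := by
    rw [show M₃ * M₂ * M₁ * M₂ = M₃ * M₂ * (M₁ * M₂) by group, SpecialLinearGroup.trace_mul_comm]
  have fricke₁ := SpecialLinearGroup.trace_mul_inv_fin_two (M₃ * M₂ * M₁) M₂
  have fricke₂ : tr (M₁ * M₃⁻¹) = tr (M₁ * M₂) * tr (M₃ * M₂) - tr (M₁ * M₂ * (M₃ * M₂)) := by
    rw [← SpecialLinearGroup.trace_mul_inv_fin_two,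
      show M₁ * M₂ * (M₃ * M₂)⁻¹ = M₁ * M₃⁻¹ by group]
  have fricke₃ := SpecialLinearGroup.trace_mul_inv_fin_two M₁ M₃
  linear_combination conj + fricke₁ - cyc - fricke₂ + fricke₃ -
    tr (M₁ * M₂) * SpecialLinearGroup.trace_mul_comm M₃ M₂
end

section
/- For any matrices M₁, M₂, M₃ ∈ SL(2,ℂ), the invariant m₃₂₁ = Tr(M₃M₂M₁) satisfies the Fricke relation m₃₂₁² − P·m₃₂₁ + Q = 4, and moreover Tr(M₁M₂M₃) = P − m₃₂₁ (i.e. Tr(M₁M₂M₃) is the other root of the quadratic). -/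
/-! `Tr(M₁M₂M₃)` and `m₃₂₁` are the two roots of `X² − P X + (Q − 4)`: their sum is `P` and their
product is `Q − 4`, and both are polynomial identities in the entries of `2 × 2` matrices. -/

open Matrix

namespace Matrix

variable {R : Type*} [CommRing R] (A B C : Matrix (Fin 2) (Fin 2) R)

theorem trace_fin_two_mul_mul_add_trace_mul_mul_rev :
    trace (A * B * C) + trace (C * B * A) =
      trace A * trace (B * C) + trace B * trace (A * C) + trace C * trace (A * B)
        - trace A * trace B * trace C := by
  simp only [trace_fin_two, mul_apply, Fin.sum_univ_two]
  ring

/-- Homogenised form of the Fricke relation: each monomial of `Q - 4` is completed by the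
determinants of the matrices it is missing, so the identity holds for all `2 × 2` matrices. -/
theorem trace_fin_two_mul_mul_mul_trace_mul_mul_rev :
    trace (A * B * C) * trace (C * B * A) =
      trace A ^ 2 * det B * det C + trace B ^ 2 * det A * det C + trace C ^ 2 * det A * det B
        + trace (A * B) ^ 2 * det C + trace (B * C) ^ 2 * det A + trace (A * C) ^ 2 * det B
        + trace (A * B) * trace (B * C) * trace (A * C)
        - trace A * trace B * trace (A * B) * det C - trace B * trace C * trace (B * C) * det A
        - trace A * trace C * trace (A * C) * det B - 4 * det A * det B * det C := by
  simp only [trace_fin_two, det_fin_two, mul_apply, Fin.sum_univ_two]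
  ring

end Matrix

/-- The Fricke relation `m₃₂₁² − P·m₃₂₁ + Q = 4` for traces of an SL(2,ℂ) triple,
together with `Tr(M₁M₂M₃) = P − m₃₂₁`. -/
theorem stmt1 (M₁ M₂ M₃ : Matrix.SpecialLinearGroup (Fin 2) ℂ)
    (m₁ m₂ m₃ m₁₂ m₂₃ m₁₃ m₃₂₁ P Q : ℂ)
    (hm₁ : m₁ = ((M₁ : Matrix (Fin 2) (Fin 2) ℂ)).trace)
    (hm₂ : m₂ = ((M₂ : Matrix (Fin 2) (Fin 2) ℂ)).trace)
    (hm₃ : m₃ = ((M₃ : Matrix (Fin 2) (Fin 2) ℂ)).trace)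
    (hm₁₂ : m₁₂ = ((M₁ * M₂ : Matrix.SpecialLinearGroup (Fin 2) ℂ) : Matrix (Fin 2) (Fin 2) ℂ).trace)
    (hm₂₃ : m₂₃ = ((M₂ * M₃ : Matrix.SpecialLinearGroup (Fin 2) ℂ) : Matrix (Fin 2) (Fin 2) ℂ).trace)
    (hm₁₃ : m₁₃ = ((M₁ * M₃ : Matrix.SpecialLinearGroup (Fin 2) ℂ) : Matrix (Fin 2) (Fin 2) ℂ).trace)
    (hm₃₂₁ : m₃₂₁ = ((M₃ * M₂ * M₁ : Matrix.SpecialLinearGroup (Fin 2) ℂ) : Matrix (Fin 2) (Fin 2) ℂ).trace)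
    (hP : P = m₁ * m₂₃ + m₂ * m₁₃ + m₃ * m₁₂ - m₁ * m₂ * m₃)
    (hQ : Q = m₁ ^ 2 + m₂ ^ 2 + m₃ ^ 2 + m₁₂ ^ 2 + m₂₃ ^ 2 + m₁₃ ^ 2 + m₁₂ * m₂₃ * m₁₃
        - m₁ * m₂ * m₁₂ - m₂ * m₃ * m₂₃ - m₁ * m₃ * m₁₃) :
    m₃₂₁ ^ 2 - P * m₃₂₁ + Q = 4 ∧
    ((M₁ * M₂ * M₃ : Matrix.SpecialLinearGroup (Fin 2) ℂ) : Matrix (Fin 2) (Fin 2) ℂ).trace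
      = P - m₃₂₁ := by
  simp only [Matrix.SpecialLinearGroup.coe_mul] at *
  have hsum := trace_fin_two_mul_mul_add_trace_mul_mul_rev (M₁ : Matrix (Fin 2) (Fin 2) ℂ) M₂ M₃
  have hprod := trace_fin_two_mul_mul_mul_trace_mul_mul_rev (M₁ : Matrix (Fin 2) (Fin 2) ℂ) M₂ M₃
  simp only [Matrix.SpecialLinearGroup.det_coe, mul_one] at hprod
  rw [← hm₁, ← hm₂, ← hm₃, ← hm₁₂, ← hm₂₃, ← hm₁₃, ← hm₃₂₁] at hsum hprod
  rw [← hP] at hsum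
  rw [← hQ] at hprod
  exact ⟨by linear_combination m₃₂₁ * hsum - hprod, by linear_combination hsum⟩
end

section
/- Let r_i = 1 + e_i⊗α_i (i = 1,2,3) be invertible pseudo-reflections in GL(3,ℂ) (so t_i² := 1 + α_i(e_i) ≠ 0). Then the analogue of the Fricke relation holds: (t₃²t₁₂ + t₂²t₁₃ + t₁²t₂₃ − t₁²t₂² − t₂²t₃² − t₁²t₃² − t₃₂₁′)·(t₃₂₁ + t₁² + t₂² + t₃² − t₁₂ − t₁₃ − t₂₃) = (t₁₂ − t₁² − t₂²)(t₁₃ − t₁² − t₃²)(t₂₃ − t₂² − t₃²), where t_{ij} := Tr(r_ir_j) − 1, t₃₂₁ := Tr(r₃r₂r₁) and t₃₂₁′ := det(r₃r₂r₁)·Tr((r₃r₂r₁)⁻¹). -/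
/-!
Write `Wᵢ = eᵢ ⊗ αᵢ` and `uᵢⱼ = αᵢ(eⱼ)`. Since `Wᵢ Wⱼ = uᵢⱼ • (eᵢ ⊗ αⱼ)`, the trace of any product
of three matrices `cᵢ • 1 + Wᵢ` is a polynomial in the `cᵢ` and the `uᵢⱼ`. This covers `t₃₂₁`, and
also `t₃₂₁′ = Tr adj(r₃r₂r₁) = Tr(adj r₁ · adj r₂ · adj r₃)` because `adj(1 + W) = t² • 1 - W`.
After substitution the relation reduces to
`(u₁₂u₂₃u₃₁)(u₃₂u₂₁u₁₃) = (u₂₃u₃₂)(u₁₂u₂₁)(u₁₃u₃₁)`.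
-/

open Matrix

namespace Matrix

variable {n R : Type*} [Fintype n] [DecidableEq n] [CommRing R]

theorem det_one_add_vecMulVec (w v : n → R) : det (1 + vecMulVec w v) = 1 + v ⬝ᵥ w := by
  rw [vecMulVec_eq Unit, det_one_add_replicateCol_mul_replicateRow]

theorem adjugate_one_add_vecMulVec (w v : n → R) (h : IsUnit (1 + v ⬝ᵥ w)) :
    adjugate (1 + vecMulVec w v) = (1 + v ⬝ᵥ w) • 1 - vecMulVec w v := by
  set M := 1 + vecMulVec w v
  set B := (1 + v ⬝ᵥ w) • (1 : Matrix n n R) - vecMulVec w v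
  have hMB : M * B = (1 + v ⬝ᵥ w) • 1 := by
    simp only [M, B, add_mul, mul_sub, one_mul, Matrix.mul_smul, mul_one, vecMulVec_mul_vecMulVec,
      vecMulVec_smul]
    module
  apply h.smul_left_cancel.mp
  calc (1 + v ⬝ᵥ w) • adjugate M = adjugate M * (M * B) := by rw [hMB, Matrix.mul_smul, mul_one]
    _ = M.det • B := by rw [← mul_assoc, adjugate_mul, smul_mul, one_mul]
    _ = (1 + v ⬝ᵥ w) • B := by rw [det_one_add_vecMulVec]

theorem det_mul_trace_inv {M : Matrix n n R} (h : IsUnit M.det) :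
    M.det * M⁻¹.trace = M.adjugate.trace := by
  rw [inv_def, trace_smul, smul_eq_mul, ← mul_assoc, Ring.mul_inverse_cancel _ h, one_mul]

theorem trace_one_add_vecMulVec_mul_one_add_vecMulVec (w₁ v₁ w₂ v₂ : n → R) :
    trace ((1 + vecMulVec w₁ v₁) * (1 + vecMulVec w₂ v₂)) =
      Fintype.card n + v₁ ⬝ᵥ w₁ + v₂ ⬝ᵥ w₂ + (v₁ ⬝ᵥ w₂) * (v₂ ⬝ᵥ w₁) := by
  simp only [add_mul, mul_add, one_mul, mul_one, vecMulVec_mul_vecMulVec, vecMulVec_smul,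
    trace_add, trace_one, trace_vecMulVec, trace_smul, smul_eq_mul, dotProduct_comm w₁,
    dotProduct_comm w₂]
  ring

theorem trace_smul_one_add_vecMulVec_mul₃ (c₁ c₂ c₃ : R) (w₁ v₁ w₂ v₂ w₃ v₃ : n → R) :
    trace ((c₁ • 1 + vecMulVec w₁ v₁) * (c₂ • 1 + vecMulVec w₂ v₂) * (c₃ • 1 + vecMulVec w₃ v₃)) =
      Fintype.card n * c₁ * c₂ * c₃ + c₂ * c₃ * (v₁ ⬝ᵥ w₁) + c₁ * c₃ * (v₂ ⬝ᵥ w₂)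
        + c₁ * c₂ * (v₃ ⬝ᵥ w₃) + c₃ * (v₁ ⬝ᵥ w₂) * (v₂ ⬝ᵥ w₁) + c₂ * (v₁ ⬝ᵥ w₃) * (v₃ ⬝ᵥ w₁)
        + c₁ * (v₂ ⬝ᵥ w₃) * (v₃ ⬝ᵥ w₂) + (v₁ ⬝ᵥ w₂) * (v₂ ⬝ᵥ w₃) * (v₃ ⬝ᵥ w₁) := by
  simp only [add_mul, mul_add, Matrix.smul_mul, Matrix.mul_smul, one_mul, mul_one,
    vecMulVec_mul_vecMulVec, vecMulVec_smul, smul_smul, trace_add, trace_one, trace_vecMulVec,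
    trace_smul, smul_eq_mul, dotProduct_comm w₁, dotProduct_comm w₂, dotProduct_comm w₃]
  ring

end Matrix

/-- `r 0, r 1, r 2` play the roles of `r₁, r₂, r₃`, and `t1, t2, t3` stand for `t₁², t₂², t₃²`. -/
theorem stmt5 (e a : Fin 3 → Fin 3 → ℂ)
    (ht : ∀ i, 1 + a i ⬝ᵥ e i ≠ 0)
    (r : Fin 3 → Matrix (Fin 3) (Fin 3) ℂ)
    (hr : ∀ i, r i = 1 + vecMulVec (e i) (a i))
    (t1 t2 t3 t12 t23 t13 t321 t321' : ℂ)
    (ht1 : t1 = 1 + a 0 ⬝ᵥ e 0) (ht2 : t2 = 1 + a 1 ⬝ᵥ e 1) (ht3 : t3 = 1 + a 2 ⬝ᵥ e 2)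
    (ht12 : t12 = (r 0 * r 1).trace - 1)
    (ht23 : t23 = (r 1 * r 2).trace - 1)
    (ht13 : t13 = (r 0 * r 2).trace - 1)
    (ht321 : t321 = (r 2 * r 1 * r 0).trace)
    (ht321' : t321' = (r 2 * r 1 * r 0).det * ((r 2 * r 1 * r 0)⁻¹).trace) :
    (t3 * t12 + t2 * t13 + t1 * t23 - t1 * t2 - t2 * t3 - t1 * t3 - t321')
        * (t321 + t1 + t2 + t3 - t12 - t13 - t23) =
      (t12 - t1 - t2) * (t13 - t1 - t3) * (t23 - t2 - t3) := by
  have hdet (i) : (r i).det = 1 + a i ⬝ᵥ e i := by rw [hr i, det_one_add_vecMulVec]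
  have hadj (i) : adjugate (r i) = (1 + a i ⬝ᵥ e i) • 1 + vecMulVec (-e i) (a i) := by
    rw [hr i, adjugate_one_add_vecMulVec _ _ (ht i).isUnit, neg_vecMulVec, sub_eq_add_neg]
  have hunit : IsUnit (r 2 * r 1 * r 0).det := by
    simpa only [det_mul, hdet, isUnit_iff_ne_zero, mul_ne_zero_iff] using ⟨⟨ht 2, ht 1⟩, ht 0⟩
  rw [hr, hr, hr, ← one_smul ℂ (1 : Matrix (Fin 3) (Fin 3) ℂ), trace_smul_one_add_vecMulVec_mul₃]
    at ht321
  rw [det_mul_trace_inv hunit, adjugate_mul_distrib, adjugate_mul_distrib, ← mul_assoc, hadj,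
    hadj, hadj, trace_smul_one_add_vecMulVec_mul₃] at ht321'
  simp only [hr, trace_one_add_vecMulVec_mul_one_add_vecMulVec] at ht12 ht23 ht13
  simp only [dotProduct_neg, Fintype.card_fin] at *
  subst_vars
  ring
end

section
/- Let t₁,t₂,t₃,n₁,n₂,n₃ ∈ ℂ* satisfy t₁t₂t₃ = n₁n₂n₃, and let t₁₂,t₂₃,t₁₃ ∈ ℂ. Set t₃₂₁ := n₁²+n₂²+n₃², t₃₂₁′ := n₁²n₂²+n₂²n₃²+n₁²n₃², and define m_i := t_i/n₁ + n₁/t_i (i=1,2,3), m₁₂ := t₁₂/(t₁t₂), m₂₃ := t₂₃/(t₂t₃), m₁₃ := t₁₃/(t₁t₃), m₃₂₁ := n₂/n₃ + n₃/n₂. Then the following two identities hold (expressing that the map φ intertwines the braid group actions on pseudo-reflection data and on SL(2,ℂ)-triple data): (i) (t₃₂₁ + t₁² + t₃² − t₁₃ + (t₃₂₁′ − t₁₂t₂₃)/t₂²)/(t₁t₃) = m₂m₃₂₁ + m₁m₃ − m₁₃ − m₁₂m₂₃; (ii) (t₃₂₁ + t₂² + t₃² − t₂₃ + (t₃₂₁′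 − t₁₃t₁₂)/t₁²)/(t₂t₃) = m₁m₃₂₁ + m₂m₃ − m₂₃ − m₁₃m₁₂. -/
/-!
Write `m i = (t i ^ 2 + n₁ ^ 2) / (n₁ t i)` and `m₃₂₁ = (n₂ ^ 2 + n₃ ^ 2) / (n₂ n₃)`. After
multiplying the first identity by `t₁ t₃`, the `t₁₃` and `t₁₂ t₂₃` terms agree on both sides, and
the relation `t₁ t₃ = n₁ n₂ n₃ / t₂` turns `t₁ t₃ m₂ m₃₂₁` and `t₁ t₃ m₁ m₃` into the remaining
terms `n₂² + n₃² + n₁² (n₂² + n₃²) / t₂²` and `n₁² + t₁² + t₃² + n₂² n₃² / t₂²`. The second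
identity is the first one with the indices `1` and `2` exchanged.
-/

theorem braid_equivariance_component {K : Type*} [Field K] {t1 t2 t3 n1 n2 n3 : K}
    (ht1 : t1 ≠ 0) (ht2 : t2 ≠ 0) (ht3 : t3 ≠ 0) (hprod : t1 * t2 * t3 = n1 * n2 * n3)
    (t12 t23 t13 : K) :
    (n1 ^ 2 + n2 ^ 2 + n3 ^ 2 + t1 ^ 2 + t3 ^ 2 - t13
        + (n1 ^ 2 * n2 ^ 2 + n2 ^ 2 * n3 ^ 2 + n1 ^ 2 * n3 ^ 2 - t12 * t23) / t2 ^ 2) / (t1 * t3)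
      = (t2 / n1 + n1 / t2) * (n2 / n3 + n3 / n2) + (t1 / n1 + n1 / t1) * (t3 / n1 + n1 / t3)
        - t13 / (t1 * t3) - t12 / (t1 * t2) * (t23 / (t2 * t3)) := by
  have hn : n1 * n2 * n3 ≠ 0 := hprod ▸ mul_ne_zero (mul_ne_zero ht1 ht2) ht3
  simp only [mul_ne_zero_iff] at hn
  obtain ⟨⟨hn1, hn2⟩, hn3⟩ := hn
  have hm2m321 : t1 * t3 * ((t2 / n1 + n1 / t2) * (n2 / n3 + n3 / n2))
      = n2 ^ 2 + n3 ^ 2 + n1 ^ 2 * (n2 ^ 2 + n3 ^ 2) / t2 ^ 2 := by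
    field_simp
    linear_combination (t2 ^ 2 + n1 ^ 2) * (n2 ^ 2 + n3 ^ 2) * hprod
  have hm1m3 : t1 * t3 * ((t1 / n1 + n1 / t1) * (t3 / n1 + n1 / t3))
      = n1 ^ 2 + t1 ^ 2 + t3 ^ 2 + n2 ^ 2 * n3 ^ 2 / t2 ^ 2 := by
    field_simp
    linear_combination (t1 * t2 * t3 + n1 * n2 * n3) * hprod
  rw [div_eq_iff (mul_ne_zero ht1 ht3)]
  calc _ = t1 * t3 * ((t2 / n1 + n1 / t2) * (n2 / n3 + n3 / n2))
        + t1 * t3 * ((t1 / n1 + n1 / t1) * (t3 / n1 + n1 / t3)) - t13 - t12 * t23 / t2 ^ 2 := by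
        rw [hm2m321, hm1m3]; ring
    _ = _ := by field_simp

theorem stmt6_general (t1 t2 t3 n1 n2 n3 : ℂ)
    (ht1 : t1 ≠ 0) (ht2 : t2 ≠ 0) (ht3 : t3 ≠ 0)
    (hprod : t1 * t2 * t3 = n1 * n2 * n3)
    (t12 t23 t13 : ℂ)
    (t321 t321' m1 m2 m3 m12 m23 m13 m321 : ℂ)
    (ht321 : t321 = n1 ^ 2 + n2 ^ 2 + n3 ^ 2)
    (ht321' : t321' = n1 ^ 2 * n2 ^ 2 + n2 ^ 2 * n3 ^ 2 + n1 ^ 2 * n3 ^ 2)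
    (hm1 : m1 = t1 / n1 + n1 / t1)
    (hm2 : m2 = t2 / n1 + n1 / t2)
    (hm3 : m3 = t3 / n1 + n1 / t3)
    (hm12 : m12 = t12 / (t1 * t2))
    (hm23 : m23 = t23 / (t2 * t3))
    (hm13 : m13 = t13 / (t1 * t3))
    (hm321 : m321 = n2 / n3 + n3 / n2) :
    (t321 + t1 ^ 2 + t3 ^ 2 - t13 + (t321' - t12 * t23) / t2 ^ 2) / (t1 * t3)
        = m2 * m321 + m1 * m3 - m13 - m12 * m23 ∧
    (t321 + t2 ^ 2 + t3 ^ 2 - t23 + (t321' - t13 * t12) / t1 ^ 2) / (t2 * t3)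
        = m1 * m321 + m2 * m3 - m23 - m13 * m12 := by
  subst ht321 ht321' hm1 hm2 hm3 hm12 hm23 hm13 hm321
  have hprod' : t2 * t1 * t3 = n1 * n2 * n3 := by rw [mul_comm t2, hprod]
  refine ⟨braid_equivariance_component ht1 ht2 ht3 hprod t12 t23 t13, ?_⟩
  convert braid_equivariance_component ht2 ht1 ht3 hprod' t12 t13 t23 using 2 <;> ring

/-- The two nontrivial components of the braid-group equivariance of the map φ
from pseudo-reflection data to SL(2,ℂ)-triple data. -/
theorem stmt6 (t1 t2 t3 n1 n2 n3 : ℂ)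
    (ht1 : t1 ≠ 0) (ht2 : t2 ≠ 0) (ht3 : t3 ≠ 0)
    (hn1 : n1 ≠ 0) (hn2 : n2 ≠ 0) (hn3 : n3 ≠ 0)
    (hprod : t1 * t2 * t3 = n1 * n2 * n3)
    (t12 t23 t13 : ℂ)
    (t321 t321' m1 m2 m3 m12 m23 m13 m321 : ℂ)
    (ht321 : t321 = n1 ^ 2 + n2 ^ 2 + n3 ^ 2)
    (ht321' : t321' = n1 ^ 2 * n2 ^ 2 + n2 ^ 2 * n3 ^ 2 + n1 ^ 2 * n3 ^ 2)
    (hm1 : m1 = t1 / n1 + n1 / t1)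
    (hm2 : m2 = t2 / n1 + n1 / t2)
    (hm3 : m3 = t3 / n1 + n1 / t3)
    (hm12 : m12 = t12 / (t1 * t2))
    (hm23 : m23 = t23 / (t2 * t3))
    (hm13 : m13 = t13 / (t1 * t3))
    (hm321 : m321 = n2 / n3 + n3 / n2) :
    (t321 + t1 ^ 2 + t3 ^ 2 - t13 + (t321' - t12 * t23) / t2 ^ 2) / (t1 * t3)
        = m2 * m321 + m1 * m3 - m13 - m12 * m23 ∧
    (t321 + t2 ^ 2 + t3 ^ 2 - t23 + (t321' - t13 * t12) / t1 ^ 2) / (t2 * t3)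
        = m1 * m321 + m2 * m3 - m23 - m13 * m12 :=
  stmt6_general t1 t2 t3 n1 n2 n3 ht1 ht2 ht3 hprod t12 t23 t13 t321 t321' m1 m2 m3 m12 m23 m13 m321
    ht321 ht321' hm1 hm2 hm3 hm12 hm23 hm13 hm321
end

section
/- Let t₁,t₂,t₃,n₁,n₂,n₃ ∈ ℂ* satisfy t₁t₂t₃ = n₁n₂n₃ and let t₁₂,t₂₃,t₁₃ ∈ ℂ satisfy the 3×3 Fricke relation (t₃²t₁₂ + t₂²t₁₃ + t₁²t₂₃ − t₁²t₂² − t₂²t₃² − t₁²t₃² − t₃₂₁′)·(t₃₂₁ + t₁² + t₂² + t₃² − t₁₂ − t₁₃ − t₂₃) = (t₁₂ − t₁² − t₂²)(t₁₃ − t₁² − t₃²)(t₂₃ − t₂² − t₃²), where t₃₂₁ := n₁²+n₂²+n₃² and t₃₂₁′ := n₁²n₂²+n₂²n₃²+n₁²n₃². Then the image data under φ satisfies the 2×2 Fricke relation m₃₂₁² − P·m₃₂₁ + Q = 4, where m_i := t_i/n₁ + n₁/t_i, m₁₂ := t₁₂/(t₁t₂), m₂₃ := t₂₃/(t₂t₃),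 m₁₃ := t₁₃/(t₁t₃), m₃₂₁ := n₂/n₃ + n₃/n₂, P := m₁m₂₃ + m₂m₁₃ + m₃m₁₂ − m₁m₂m₃, and Q := m₁²+m₂²+m₃²+m₁₂²+m₂₃²+m₁₃²+m₁₂m₂₃m₁₃ − m₁m₂m₁₂ − m₂m₃m₂₃ − m₁m₃m₁₃. -/
/-!
Using `t₁t₂t₃ = n₁n₂n₃` to eliminate `n₃ = t₁t₂t₃ / (n₁n₂)`, the difference of the two sides of
the 3×3 Fricke relation becomes `-(t₁t₂t₃)²` times the defect `m₃₂₁² - P m₃₂₁ + Q - 4` of the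
classical Fricke relation at `φ(t)`, an identity of rational functions. As the `tᵢ` are nonzero,
one relation holds exactly when the other does.
-/

section Fricke

variable {K : Type*} [Field K]

def frickeSL2 (m1 m2 m3 m12 m23 m13 m321 : K) : K :=
  m321 ^ 2 - (m1 * m23 + m2 * m13 + m3 * m12 - m1 * m2 * m3) * m321
    + (m1 ^ 2 + m2 ^ 2 + m3 ^ 2 + m12 ^ 2 + m23 ^ 2 + m13 ^ 2 + m12 * m23 * m13
      - m1 * m2 * m12 - m2 * m3 * m23 - m1 * m3 * m13) - 4

def frickePseudoRefl (t1 t2 t3 n1 n2 n3 t12 t23 t13 : K) : K :=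
  (t3 ^ 2 * t12 + t2 ^ 2 * t13 + t1 ^ 2 * t23 - t1 ^ 2 * t2 ^ 2 - t2 ^ 2 * t3 ^ 2
      - t1 ^ 2 * t3 ^ 2 - (n1 ^ 2 * n2 ^ 2 + n2 ^ 2 * n3 ^ 2 + n1 ^ 2 * n3 ^ 2))
    * (n1 ^ 2 + n2 ^ 2 + n3 ^ 2 + t1 ^ 2 + t2 ^ 2 + t3 ^ 2 - t12 - t13 - t23)
  - (t12 - t1 ^ 2 - t2 ^ 2) * (t13 - t1 ^ 2 - t3 ^ 2) * (t23 - t2 ^ 2 - t3 ^ 2)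

theorem frickePseudoRefl_eq_mul_frickeSL2 {t1 t2 t3 n1 n2 n3 : K} (t12 t23 t13 : K)
    (ht1 : t1 ≠ 0) (ht2 : t2 ≠ 0) (ht3 : t3 ≠ 0) (hprod : t1 * t2 * t3 = n1 * n2 * n3) :
    frickePseudoRefl t1 t2 t3 n1 n2 n3 t12 t23 t13 =
      -(t1 * t2 * t3) ^ 2 * frickeSL2 (t1 / n1 + n1 / t1) (t2 / n1 + n1 / t2)
        (t3 / n1 + n1 / t3) (t12 / (t1 * t2)) (t23 / (t2 * t3)) (t13 / (t1 * t3))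
        (n2 / n3 + n3 / n2) := by
  have hn : n1 * n2 * n3 ≠ 0 := hprod ▸ mul_ne_zero (mul_ne_zero ht1 ht2) ht3
  have hn1 : n1 ≠ 0 := left_ne_zero_of_mul (left_ne_zero_of_mul hn)
  have hn2 : n2 ≠ 0 := right_ne_zero_of_mul (left_ne_zero_of_mul hn)
  obtain rfl : n3 = t1 * t2 * t3 / (n1 * n2) := by rw [hprod]; field_simp
  unfold frickePseudoRefl frickeSL2
  field_simp
  ring

end Fricke

theorem stmt7_general (t1 t2 t3 n1 n2 n3 : ℂ)
    (ht1 : t1 ≠ 0) (ht2 : t2 ≠ 0) (ht3 : t3 ≠ 0)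
    (hprod : t1 * t2 * t3 = n1 * n2 * n3)
    (t12 t23 t13 t321 t321' : ℂ)
    (ht321 : t321 = n1 ^ 2 + n2 ^ 2 + n3 ^ 2)
    (ht321' : t321' = n1 ^ 2 * n2 ^ 2 + n2 ^ 2 * n3 ^ 2 + n1 ^ 2 * n3 ^ 2)
    (hFricke3 :
      (t3 ^ 2 * t12 + t2 ^ 2 * t13 + t1 ^ 2 * t23
          - t1 ^ 2 * t2 ^ 2 - t2 ^ 2 * t3 ^ 2 - t1 ^ 2 * t3 ^ 2 - t321')
        * (t321 + t1 ^ 2 + t2 ^ 2 + t3 ^ 2 - t12 - t13 - t23) =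
      (t12 - t1 ^ 2 - t2 ^ 2) * (t13 - t1 ^ 2 - t3 ^ 2) * (t23 - t2 ^ 2 - t3 ^ 2))
    (m1 m2 m3 m12 m23 m13 m321 P Q : ℂ)
    (hm1 : m1 = t1 / n1 + n1 / t1)
    (hm2 : m2 = t2 / n1 + n1 / t2)
    (hm3 : m3 = t3 / n1 + n1 / t3)
    (hm12 : m12 = t12 / (t1 * t2))
    (hm23 : m23 = t23 / (t2 * t3))
    (hm13 : m13 = t13 / (t1 * t3))
    (hm321 : m321 = n2 / n3 + n3 / n2)
    (hP : P = m1 * m23 + m2 * m13 + m3 * m12 - m1 * m2 * m3)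
    (hQ : Q = m1 ^ 2 + m2 ^ 2 + m3 ^ 2 + m12 ^ 2 + m23 ^ 2 + m13 ^ 2 + m12 * m23 * m13
        - m1 * m2 * m12 - m2 * m3 * m23 - m1 * m3 * m13) :
    m321 ^ 2 - P * m321 + Q = 4 := by
  subst ht321 ht321' hP hQ hm1 hm2 hm3 hm12 hm23 hm13 hm321
  have hdefect := frickePseudoRefl_eq_mul_frickeSL2 t12 t23 t13 ht1 ht2 ht3 hprod
  rw [frickePseudoRefl, hFricke3, sub_self, eq_comm, mul_eq_zero] at hdefect
  have hsl2 := hdefect.resolve_left (by simp [ht1, ht2, ht3])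
  exact sub_eq_zero.mp hsl2

/-- The map φ is well defined: pseudo-reflection data satisfying the 3×3 Fricke
relation is sent to SL(2,ℂ)-triple data satisfying the classical Fricke relation. -/
theorem stmt7 (t1 t2 t3 n1 n2 n3 : ℂ)
    (ht1 : t1 ≠ 0) (ht2 : t2 ≠ 0) (ht3 : t3 ≠ 0)
    (hn1 : n1 ≠ 0) (hn2 : n2 ≠ 0) (hn3 : n3 ≠ 0)
    (hprod : t1 * t2 * t3 = n1 * n2 * n3)
    (t12 t23 t13 t321 t321' : ℂ)
    (ht321 : t321 = n1 ^ 2 + n2 ^ 2 + n3 ^ 2)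
    (ht321' : t321' = n1 ^ 2 * n2 ^ 2 + n2 ^ 2 * n3 ^ 2 + n1 ^ 2 * n3 ^ 2)
    (hFricke3 :
      (t3 ^ 2 * t12 + t2 ^ 2 * t13 + t1 ^ 2 * t23
          - t1 ^ 2 * t2 ^ 2 - t2 ^ 2 * t3 ^ 2 - t1 ^ 2 * t3 ^ 2 - t321')
        * (t321 + t1 ^ 2 + t2 ^ 2 + t3 ^ 2 - t12 - t13 - t23) =
      (t12 - t1 ^ 2 - t2 ^ 2) * (t13 - t1 ^ 2 - t3 ^ 2) * (t23 - t2 ^ 2 - t3 ^ 2))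
    (m1 m2 m3 m12 m23 m13 m321 P Q : ℂ)
    (hm1 : m1 = t1 / n1 + n1 / t1)
    (hm2 : m2 = t2 / n1 + n1 / t2)
    (hm3 : m3 = t3 / n1 + n1 / t3)
    (hm12 : m12 = t12 / (t1 * t2))
    (hm23 : m23 = t23 / (t2 * t3))
    (hm13 : m13 = t13 / (t1 * t3))
    (hm321 : m321 = n2 / n3 + n3 / n2)
    (hP : P = m1 * m23 + m2 * m13 + m3 * m12 - m1 * m2 * m3)
    (hQ : Q = m1 ^ 2 + m2 ^ 2 + m3 ^ 2 + m12 ^ 2 + m23 ^ 2 + m13 ^ 2 + m12 * m23 * m13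
        - m1 * m2 * m12 - m2 * m3 * m23 - m1 * m3 * m13) :
    m321 ^ 2 - P * m321 + Q = 4 :=
  stmt7_general t1 t2 t3 n1 n2 n3 ht1 ht2 ht3 hprod t12 t23 t13 t321 t321' ht321 ht321' hFricke3 m1
    m2 m3 m12 m23 m13 m321 P Q hm1 hm2 hm3 hm12 hm23 hm13 hm321 hP hQ
end

section
/- Let e₁, e₂, e₃ be a basis of V = ℂ³, let α₁, α₂, α₃ ∈ V*, and suppose each r_i := 1 + e_i⊗α_i is invertible (i.e. 1 + α_i(e_i) ≠ 0). If v ∈ V satisfies r₃r₂r₁v = v, then r_iv = v for i = 1, 2, 3. -/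
/-!
Each pseudo-reflection `rᵢ = 1 + eᵢ⊗αᵢ` moves a vector by a multiple of `eᵢ`, so the partial
products `rₖ⋯r₁` move `v` only inside `span {e₁, …, eₖ}`. If `rₘ⋯r₁v = v`, the last factor moves
`w = rₘ₋₁⋯r₁v` by `αₘ(w) eₘ`, and `w - v + αₘ(w) eₘ = 0` with `w - v ∈ span {e₁, …, eₘ₋₁}`;
linear independence forces `αₘ(w) = 0` and `w = v`, so `rₘv = v`, and induction takes over.
-/

open Matrix

lemma List.prod_reverse_ofFn_succ {M : Type*} [Monoid M] {m : ℕ} (r : Fin (m + 1) → M) :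
    (List.ofFn r).reverse.prod =
      r (Fin.last m) * (List.ofFn fun i => r i.castSucc).reverse.prod := by
  rw [List.ofFn_succ', List.concat_eq_append, List.reverse_concat', List.prod_cons]

namespace Matrix

variable {K n : Type*} [Field K] [Fintype n] [DecidableEq n]

def pseudoReflection (e α : n → K) : Matrix n n K := 1 + vecMulVec e α

lemma pseudoReflection_mulVec (e α x : n → K) :
    pseudoReflection e α *ᵥ x = x + (α ⬝ᵥ x) • e := by
  rw [pseudoReflection, add_mulVec, one_mulVec, vecMulVec_mulVec, op_smul_eq_smul]

lemma pseudoReflection_mulVec_eq_self_iff (e α x : n → K) (he : e ≠ 0) :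
    pseudoReflection e α *ᵥ x = x ↔ α ⬝ᵥ x = 0 := by
  rw [pseudoReflection_mulVec, add_eq_left, smul_eq_zero]
  simp [he]

lemma prod_pseudoReflection_mulVec_sub_mem_span {m : ℕ} (e α : Fin m → n → K) (v : n → K) :
    (List.ofFn fun i => pseudoReflection (e i) (α i)).reverse.prod *ᵥ v - v ∈
      Submodule.span K (Set.range e) := by
  induction m with
  | zero => simp
  | succ m ih =>
    rw [List.prod_reverse_ofFn_succ, ← mulVec_mulVec, pseudoReflection_mulVec,
      add_sub_right_comm]
    refine add_mem ?_ (Submodule.smul_mem _ _ (Submodule.subset_span ⟨_, rfl⟩))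
    exact Submodule.span_mono (Set.range_comp_subset_range _ _) (ih (Fin.init e) (Fin.init α))

theorem dotProduct_eq_zero_of_prod_pseudoReflection_mulVec_eq_self {m : ℕ}
    (e α : Fin m → n → K) (he : LinearIndependent K e) (v : n → K)
    (hv : (List.ofFn fun i => pseudoReflection (e i) (α i)).reverse.prod *ᵥ v = v) (i : Fin m) :
    α i ⬝ᵥ v = 0 := by
  induction m with
  | zero => exact i.elim0
  | succ m ih =>
    rw [List.prod_reverse_ofFn_succ, ← mulVec_mulVec, pseudoReflection_mulVec] at hv
    set w := (List.ofFn fun i => pseudoReflection (e i.castSucc) (α i.castSucc)).reverse.prod *ᵥ v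
    have hw : w - v ∈ Submodule.span K (Set.range (Fin.init e)) :=
      prod_pseudoReflection_mulVec_sub_mem_span _ _ v
    rw [← Fin.snoc_init_self e, linearIndependent_finSnoc] at he
    set c := α (Fin.last m) ⬝ᵥ w with hc_def
    have hlast : c = 0 := by
      by_contra hc
      have hmem : c • e (Fin.last m) ∈ Submodule.span K (Set.range (Fin.init e)) := by
        rw [show c • e (Fin.last m) = -(w - v) by rw [← hv]; abel]
        exact neg_mem hw
      exact he.2 ((Submodule.smul_mem_iff _ hc).1 hmem)
    have hwv : w = v := by rwa [hlast, zero_smul, add_zero] at hv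
    induction i using Fin.lastCases with
    | last => rwa [hc_def, hwv] at hlast
    | cast i => exact ih _ _ he.1 hwv i

end Matrix

theorem stmt8_general (e a : Fin 3 → Fin 3 → ℂ)
    (he : LinearIndependent ℂ e)
    (r : Fin 3 → Matrix (Fin 3) (Fin 3) ℂ)
    (hr : ∀ i, r i = 1 + vecMulVec (e i) (a i))
    (v : Fin 3 → ℂ)
    (hv : (r 2 * r 1 * r 0) *ᵥ v = v) :
    ∀ i, r i *ᵥ v = v := by
  obtain rfl : r = fun i => pseudoReflection (e i) (a i) := funext hr
  have hprod : (List.ofFn fun i => pseudoReflection (e i) (a i)).reverse.prod *ᵥ v = v := by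
    simpa [List.ofFn_succ, mul_assoc] using hv
  intro i
  rw [pseudoReflection_mulVec_eq_self_iff _ _ _ (he.ne_zero i)]
  exact dotProduct_eq_zero_of_prod_pseudoReflection_mulVec_eq_self e a he v hprod i

/-- If `e₁,e₂,e₃` is a basis of ℂ³, the pseudo-reflections `rᵢ = 1 + eᵢ⊗αᵢ` are
invertible, and `r₃r₂r₁v = v`, then `rᵢv = v` for each `i`.
Here `r 0, r 1, r 2` play the roles of `r₁, r₂, r₃`. -/
theorem stmt8 (e a : Fin 3 → Fin 3 → ℂ)
    (he : LinearIndependent ℂ e)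
    (ht : ∀ i, 1 + a i ⬝ᵥ e i ≠ 0)
    (r : Fin 3 → Matrix (Fin 3) (Fin 3) ℂ)
    (hr : ∀ i, r i = 1 + vecMulVec (e i) (a i))
    (v : Fin 3 → ℂ)
    (hv : (r 2 * r 1 * r 0) *ᵥ v = v) :
    ∀ i, r i *ᵥ v = v :=
  stmt8_general e a he r hr v hv
end

section
/- (Killing–Coxeter factorisation.) Let e₁, …, e_n be a basis of V = ℂⁿ, let α₁, …, α_n ∈ V*, and suppose each r_i := 1 + e_i⊗α_i ∈ GL(V) is invertible, i.e. t_i² := 1 + α_i(e_i) ≠ 0. Let u be the n×n matrix with u_{ij} := α_i(e_j), let t² := diag(t₁², …, t_n²), let u₊ be the upper-triangular unipotent matrix with (u₊)_{jk} = u_{jk}/t_j² for j < k, and let u₋ be the lower-triangular unipotent matrix with (u₋)_{jk} = −u_{jk} for j > k (so that t²u₊ − u₋ = u). Then the matrix representing the product r_n⋯r₂r₁ in the basis (e_i) equals u₋⁻¹t²u₊; that is, if g is the matrix whose i-th column is e_i, then g⁻¹(r_n⋯r₂r₁)g = u₋⁻¹t²u₊. In particular this matrix lies in the big cell of GL_n(ℂ).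 -/
/-!
Put `c_m := r_m ⋯ r_1`. Since `c_m = c_{m-1} + e_m ⊗ β_m` with `β_m := α_m ∘ c_{m-1}`, one gets
`c_n = 1 + Σ_m e_m ⊗ β_m`, and expanding `β_m = α_m (1 + Σ_{i<m} e_i ⊗ β_i)` gives the triangular
system `β_m - Σ_{i<m} u_{mi} β_i = α_m`, i.e. `u₋ β = α`. In the basis `(e_i)` this reads
`g⁻¹ c_n g = 1 + β g = 1 + u₋⁻¹ u = u₋⁻¹ (u₋ + u)`, and `u₋ + u = t² u₊` entrywise.
-/

open Matrix

variable {R : Type*} [CommRing R]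

theorem Matrix.mul_eq_sum_vecMulVec_col_row {l m n : Type*} [Fintype m] (M : Matrix l m R)
    (N : Matrix m n R) : M * N = ∑ i, vecMulVec (M.col i) (N.row i) := by
  ext j k
  simp [mul_apply, Matrix.sum_apply, vecMulVec_apply]

theorem Matrix.det_eq_one_of_unitLowerTriangular {κ : Type*} [Fintype κ] [LinearOrder κ]
    (L : Matrix κ κ R) (c : κ → κ → R)
    (hL : ∀ i j, L i j = if i = j then 1 else if j < i then c i j else 0) : L.det = 1 := by
  have hlower : L.IsLowerTriangular := fun i j hij => by
    have hij : i < j := OrderDual.toDual_lt_toDual.mp hij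
    simp [hL, hij.ne, lt_asymm hij]
  simp [det_of_isLowerTriangular L hlower, hL]

theorem Matrix.diagonal_mul_eq_add_of_unitTriangular {K κ : Type*} [Field K] [Fintype κ]
    [LinearOrder κ] (u uPlus uMinus : Matrix κ κ K) (d : κ → K) (hd : ∀ i, d i ≠ 0)
    (hdu : ∀ i, d i = 1 + u i i)
    (huPlus : ∀ j k, uPlus j k = if j = k then 1 else if j < k then u j k / d j else 0)
    (huMinus : ∀ j k, uMinus j k = if j = k then 1 else if k < j then -u j k else 0) :
    diagonal d * uPlus = uMinus + u := by
  ext j k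
  rcases lt_trichotomy j k with hjk | rfl | hjk
  · simp [huPlus, huMinus, hjk, hjk.ne, lt_asymm hjk, mul_div_cancel₀ _ (hd j)]
  · simp [huPlus, huMinus, hdu]
  · simp [huPlus, huMinus, hjk, hjk.ne', lt_asymm hjk]

theorem exists_ofFn_reverse_prod_one_add_vecMulVec {ι : Type*} [Fintype ι] [DecidableEq ι]
    {m : ℕ} (e a : Fin m → ι → R) :
    ∃ b : Fin m → ι → R,
      (List.ofFn fun i => 1 + vecMulVec (e i) (a i)).reverse.prod =
        1 + ∑ i, vecMulVec (e i) (b i) ∧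
      ∀ i, b i = a i + ∑ j, if j < i then (a i ⬝ᵥ e j) • b j else 0 := by
  induction m with
  | zero => exact ⟨Fin.elim0, by simp, fun i => i.elim0⟩
  | succ m ih =>
    obtain ⟨b, hprod, hb⟩ := ih (fun i => e i.castSucc) (fun i => a i.castSucc)
    set c : Matrix ι ι R := 1 + ∑ i, vecMulVec (e i.castSucc) (b i)
    have hlast : a (Fin.last m) ᵥ* c =
        a (Fin.last m) + ∑ j, (a (Fin.last m) ⬝ᵥ e j.castSucc) • b j := by
      simp [c, vecMul_add, vecMul_sum, vecMul_vecMulVec]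
    refine ⟨Fin.snoc b (a (Fin.last m) ᵥ* c), ?_, Fin.lastCases ?_ fun i => ?_⟩
    · rw [List.ofFn_succ', List.concat_eq_append, List.reverse_append, List.prod_append, hprod]
      simp [Fin.sum_univ_castSucc, add_mul, vecMulVec_mul, c, add_assoc]
    · simpa [Fin.sum_univ_castSucc] using hlast
    · simpa [Fin.sum_univ_castSucc, (Fin.castSucc_lt_last i).asymm] using hb i

theorem Matrix.unitLowerTriangular_mul_eq_of_forall_eq_add_sum {ι κ : Type*} [Fintype ι]
    [Fintype κ] [LinearOrder κ] (e a b : κ → ι → R)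
    (hb : ∀ i, b i = a i + ∑ j, if j < i then (a i ⬝ᵥ e j) • b j else 0) (L : Matrix κ κ R)
    (hL : ∀ i j, L i j = if i = j then 1 else if j < i then -(a i ⬝ᵥ e j) else 0) :
    L * of b = of a := by
  ext i k
  have hentry : ∀ j, L i j * b j k =
      (if i = j then b j k else 0) - if j < i then (a i ⬝ᵥ e j) * b j k else 0 := fun j => by
    rcases eq_or_ne i j with rfl | hij
    · simp [hL]
    · by_cases hji : j < i <;> simp [hL, hij, hji]
  have hbik := congrFun (hb i) k
  simp only [Pi.add_apply, Finset.sum_apply, apply_ite (fun v : ι → R => v k), Pi.smul_apply,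
    smul_eq_mul, Pi.zero_apply] at hbik
  simp [mul_apply, hentry, Finset.sum_sub_distrib, hbik]

/-- Killing–Coxeter factorisation: if `e₁,…,e_n` is a basis of ℂⁿ and
`rᵢ = 1 + eᵢ⊗αᵢ` are invertible pseudo-reflections, then the matrix of
`r_n⋯r₂r₁` in the basis `(eᵢ)` is `u₋⁻¹ t² u₊`, where `u = t²u₊ − u₋` is the
decomposition of the pairing matrix `u_{jk} = αⱼ(e_k)` into diagonal, unipotent
upper- and lower-triangular parts.  Indices `0,…,n−1` play the roles of `1,…,n`,
so `(List.ofFn r).reverse.prod = r_n ⋯ r₂ r₁`. -/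
theorem stmt10 (n : ℕ) (e a : Fin n → Fin n → ℂ)
    (he : LinearIndependent ℂ e)
    (ht : ∀ i, 1 + a i ⬝ᵥ e i ≠ 0)
    (r : Fin n → Matrix (Fin n) (Fin n) ℂ)
    (hr : ∀ i, r i = 1 + vecMulVec (e i) (a i))
    (u t2 uPlus uMinus g : Matrix (Fin n) (Fin n) ℂ)
    (hu : ∀ j k, u j k = a j ⬝ᵥ e k)
    (ht2 : t2 = Matrix.diagonal fun i => 1 + a i ⬝ᵥ e i)
    (huPlus : ∀ j k, uPlus j k =
      if j = k then 1 else if j < k then u j k / (1 + a j ⬝ᵥ e j) else 0)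
    (huMinus : ∀ j k, uMinus j k =
      if j = k then 1 else if k < j then -u j k else 0)
    (hg : ∀ j i, g j i = e i j) :
    g⁻¹ * (List.ofFn r).reverse.prod * g = uMinus⁻¹ * t2 * uPlus := by
  obtain rfl : g = (of e)ᵀ := ext fun j i => hg j i
  obtain ⟨b, hprod, hb⟩ := exists_ofFn_reverse_prod_one_add_vecMulVec e a
  have hg_det : IsUnit (of e)ᵀ.det :=
    (isUnit_iff_isUnit_det _).mp (linearIndependent_cols_iff_isUnit.mp he)
  have huMinus_det : IsUnit uMinus.det := by
    simp [det_eq_one_of_unitLowerTriangular uMinus _ huMinus]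
  have hrows : uMinus * of b = of a :=
    unitLowerTriangular_mul_eq_of_forall_eq_add_sum e a b hb uMinus fun j k => by
      rw [huMinus, hu]
  have hcoeff : of a * (of e)ᵀ = u := by
    ext j k
    simp [mul_apply, hu, dotProduct]
  calc (of e)ᵀ⁻¹ * (List.ofFn r).reverse.prod * (of e)ᵀ
      = (of e)ᵀ⁻¹ * (1 + (of e)ᵀ * of b) * (of e)ᵀ := by
        rw [funext hr, hprod, mul_eq_sum_vecMulVec_col_row (of e)ᵀ (of b), of_col, of_row]
    _ = 1 + of b * (of e)ᵀ := by
        rw [mul_add, mul_one, ← mul_assoc, nonsing_inv_mul _ hg_det, one_mul, add_mul,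
          nonsing_inv_mul _ hg_det]
    _ = uMinus⁻¹ * (uMinus + uMinus * of b * (of e)ᵀ) := by
        rw [mul_assoc uMinus, ← mul_one_add, ← mul_assoc, nonsing_inv_mul uMinus huMinus_det,
          one_mul]
    _ = uMinus⁻¹ * t2 * uPlus := by
        rw [hrows, hcoeff, mul_assoc, ht2, diagonal_mul_eq_add_of_unitTriangular u uPlus uMinus _
          ht (fun i => by rw [hu]) huPlus huMinus]
end

section
/- Let e₁, …, e_n ∈ ℂⁿ, α₁, …, α_n ∈ (ℂⁿ)*, set r_j := 1 + e_j⊗α_j and u_{jk} := α_j(e_k), and fix i with 1 ≤ i ≤ n−1 such that t_i² := 1 + u_{ii} ≠ 0 (so r_i is invertible). Define e′_k := e_k and α′_k := α_k for k ∉ {i, i+1}, e′_i := r_i⁻¹e_{i+1}, e′_{i+1} := e_i, α′_i := α_{i+1}∘r_i, α′_{i+1} := α_i, and set u′_{jk} := α′_j(e′_k). Then u′_{jk} = u_{jk} whenever j,k ∉ {i,i+1}, and u′_{ii} = u_{i+1,i+1}, u′_{i+1,i+1} = u_{ii}, u′_{i,i+1} = t_i²·u_{i+1,i}, u′_{i+1,i}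 = u_{i,i+1}/t_i², and for every j ∉ {i,i+1}: u′_{ij} = u_{i+1,j} + u_{i+1,i}u_{ij}, u′_{ji} = u_{j,i+1} − u_{ji}u_{i,i+1}/t_i², u′_{i+1,j} = u_{ij}, u′_{j,i+1} = u_{ji}. -/
/-!
By the Sherman–Morrison formula, `rᵢ⁻¹ = 1 - eᵢ⊗αᵢ / tᵢ²`, so the new vectors are explicit
linear combinations of the old ones: `e′ᵢ = e_{i+1} - (u_{i,i+1}/tᵢ²) eᵢ` and
`α′ᵢ = α_{i+1} + u_{i+1,i} αᵢ`. Every entry of `u′` then follows by bilinearity of the pairing.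
-/

open Matrix

section PseudoReflection

variable {ι K : Type*} [Fintype ι] [DecidableEq ι]

theorem vecMul_one_add_vecMulVec [CommSemiring K] (x e α : ι → K) :
    x ᵥ* (1 + vecMulVec e α) = x + (x ⬝ᵥ e) • α := by
  rw [vecMul_add, vecMul_one, vecMul_vecMulVec]

variable [Field K]

theorem inv_one_add_vecMulVec (e α : ι → K) (h : 1 + α ⬝ᵥ e ≠ 0) :
    (1 + vecMulVec e α)⁻¹ = 1 - (1 + α ⬝ᵥ e)⁻¹ • vecMulVec e α := by
  apply inv_eq_right_inv
  have hc : (1 + α ⬝ᵥ e)⁻¹ + (1 + α ⬝ᵥ e)⁻¹ * (α ⬝ᵥ e) = 1 := by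
    field_simp
  calc (1 + vecMulVec e α) * (1 - (1 + α ⬝ᵥ e)⁻¹ • vecMulVec e α)
      = 1 + (1 - ((1 + α ⬝ᵥ e)⁻¹ + (1 + α ⬝ᵥ e)⁻¹ * (α ⬝ᵥ e))) • vecMulVec e α := by
        rw [one_add_mul, mul_sub, mul_one, mul_smul_comm, vecMulVec_mul_vecMulVec,
          vecMulVec_smul, smul_smul, sub_smul, add_smul, one_smul]
        abel
    _ = 1 := by rw [hc, sub_self, zero_smul, add_zero]

theorem inv_one_add_vecMulVec_mulVec (e α x : ι → K) (h : 1 + α ⬝ᵥ e ≠ 0) :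
    (1 + vecMulVec e α)⁻¹ *ᵥ x = x - ((α ⬝ᵥ x) / (1 + α ⬝ᵥ e)) • e := by
  rw [inv_one_add_vecMulVec e α h, sub_mulVec, one_mulVec, smul_mulVec, vecMulVec_mulVec,
    op_smul_eq_smul, smul_smul, inv_mul_eq_div]

end PseudoReflection

theorem stmt11_general (n : ℕ) (e a e' a' : Fin n → Fin n → ℂ)
    (i i1 : Fin n)
    (ht : 1 + a i ⬝ᵥ e i ≠ 0)
    (r : Fin n → Matrix (Fin n) (Fin n) ℂ)
    (hr : ∀ j, r j = 1 + vecMulVec (e j) (a j))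
    (he' : ∀ k, k ≠ i → k ≠ i1 → e' k = e k)
    (ha' : ∀ k, k ≠ i → k ≠ i1 → a' k = a k)
    (he'i : e' i = (r i)⁻¹ *ᵥ e i1)
    (he'i1 : e' i1 = e i)
    (ha'i : a' i = a i1 ᵥ* r i)
    (ha'i1 : a' i1 = a i) :
    (∀ j k, j ≠ i → j ≠ i1 → k ≠ i → k ≠ i1 → a' j ⬝ᵥ e' k = a j ⬝ᵥ e k) ∧
    a' i ⬝ᵥ e' i = a i1 ⬝ᵥ e i1 ∧
    a' i1 ⬝ᵥ e' i1 = a i ⬝ᵥ e i ∧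
    a' i ⬝ᵥ e' i1 = (1 + a i ⬝ᵥ e i) * (a i1 ⬝ᵥ e i) ∧
    a' i1 ⬝ᵥ e' i = (a i ⬝ᵥ e i1) / (1 + a i ⬝ᵥ e i) ∧
    (∀ j, j ≠ i → j ≠ i1 →
      a' i ⬝ᵥ e' j = a i1 ⬝ᵥ e j + (a i1 ⬝ᵥ e i) * (a i ⬝ᵥ e j) ∧
      a' j ⬝ᵥ e' i = a j ⬝ᵥ e i1 - (a j ⬝ᵥ e i) * (a i ⬝ᵥ e i1) / (1 + a i ⬝ᵥ e i) ∧
      a' i1 ⬝ᵥ e' j = a i ⬝ᵥ e j ∧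
      a' j ⬝ᵥ e' i1 = a j ⬝ᵥ e i) := by
  have he'i_eq : e' i = e i1 - ((a i ⬝ᵥ e i1) / (1 + a i ⬝ᵥ e i)) • e i := by
    rw [he'i, hr, inv_one_add_vecMulVec_mulVec _ _ _ ht]
  have ha'i_eq : a' i = a i1 + (a i1 ⬝ᵥ e i) • a i := by
    rw [ha'i, hr, vecMul_one_add_vecMulVec]
  refine ⟨fun j k hj hj1 hk hk1 => by rw [he' k hk hk1, ha' j hj hj1], ?_, by rw [he'i1, ha'i1],
    ?_, ?_, fun j hj hj1 => ⟨?_, ?_, by rw [he' j hj hj1, ha'i1], by rw [he'i1, ha' j hj hj1]⟩⟩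
  · rw [he'i_eq, ha'i_eq]
    simp only [dotProduct_sub, dotProduct_smul, add_dotProduct, smul_dotProduct, smul_eq_mul]
    field_simp
    ring
  · rw [he'i1, ha'i_eq, add_dotProduct, smul_dotProduct, smul_eq_mul]
    ring
  · rw [he'i_eq, ha'i1, dotProduct_sub, dotProduct_smul, smul_eq_mul]
    field_simp
    ring
  · rw [he' j hj hj1, ha'i_eq, add_dotProduct, smul_dotProduct, smul_eq_mul]
  · rw [he'i_eq, ha' j hj hj1, dotProduct_sub, dotProduct_smul, smul_eq_mul]
    ring

/-- The lifted braid group generator `γᵢ` acting on an `n`-tuple of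
pseudo-reflections `rⱼ = 1 + eⱼ⊗αⱼ` induces the stated transformation of the
pairing matrix `u_{jk} = αⱼ(e_k)`.  Here `i, i1` play the roles of `i, i+1`. -/
theorem stmt11 (n : ℕ) (e a e' a' : Fin n → Fin n → ℂ)
    (i i1 : Fin n) (hi : (i1 : ℕ) = (i : ℕ) + 1)
    (ht : 1 + a i ⬝ᵥ e i ≠ 0)
    (r : Fin n → Matrix (Fin n) (Fin n) ℂ)
    (hr : ∀ j, r j = 1 + vecMulVec (e j) (a j))
    (he' : ∀ k, k ≠ i → k ≠ i1 → e' k = e k)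
    (ha' : ∀ k, k ≠ i → k ≠ i1 → a' k = a k)
    (he'i : e' i = (r i)⁻¹ *ᵥ e i1)
    (he'i1 : e' i1 = e i)
    (ha'i : a' i = a i1 ᵥ* r i)
    (ha'i1 : a' i1 = a i) :
    (∀ j k, j ≠ i → j ≠ i1 → k ≠ i → k ≠ i1 → a' j ⬝ᵥ e' k = a j ⬝ᵥ e k) ∧
    a' i ⬝ᵥ e' i = a i1 ⬝ᵥ e i1 ∧
    a' i1 ⬝ᵥ e' i1 = a i ⬝ᵥ e i ∧
    a' i ⬝ᵥ e' i1 = (1 + a i ⬝ᵥ e i) * (a i1 ⬝ᵥ e i) ∧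
    a' i1 ⬝ᵥ e' i = (a i ⬝ᵥ e i1) / (1 + a i ⬝ᵥ e i) ∧
    (∀ j, j ≠ i → j ≠ i1 →
      a' i ⬝ᵥ e' j = a i1 ⬝ᵥ e j + (a i1 ⬝ᵥ e i) * (a i ⬝ᵥ e j) ∧
      a' j ⬝ᵥ e' i = a j ⬝ᵥ e i1 - (a j ⬝ᵥ e i) * (a i ⬝ᵥ e i1) / (1 + a i ⬝ᵥ e i) ∧
      a' i1 ⬝ᵥ e' j = a i ⬝ᵥ e j ∧
      a' j ⬝ᵥ e' i1 = a j ⬝ᵥ e i) :=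
  stmt11_general n e a e' a' i i1 ht r hr he' ha' he'i he'i1 ha'i ha'i1
end

section
/- Let e₁, …, e_n be a basis of ℂⁿ, α₁, …, α_n ∈ (ℂⁿ)*, r_j := 1 + e_j⊗α_j all invertible, u_{jk} := α_j(e_k), t_j² := 1 + u_{jj} ≠ 0. Fix i with 1 ≤ i ≤ n−1 and define the braid-transformed tuple by e′_k := e_k, α′_k := α_k for k ∉ {i,i+1}, e′_i := r_i⁻¹e_{i+1}, e′_{i+1} := e_i, α′_i := α_{i+1}∘r_i, α′_{i+1} := α_i. Let g (resp. g′) be the matrix with columns e_j (resp. e′_j), let P_i be the permutation matrix of the transposition (i, i+1), and let ξ_i be the matrix equal to the identity except that its (i,i+1) entry is u_{i,i+1}/t_i². Then g′ = g·ξ_i⁻¹P_i, and consequently the matrices a := g⁻¹(r_n⋯r₁)g and a′ := g′⁻¹(r_n⋯r₁)g′ of the product r_n⋯r₁ in the two bases satisfy a′ = P_iξ_i·a·ξ_i⁻¹P_i. -/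
open Matrix

/-!
By the Sherman–Morrison formula, `rᵢ⁻¹ eᵢ₊₁ = eᵢ₊₁ - (uᵢ,ᵢ₊₁ / tᵢ²) eᵢ`. Hence the new basis
arises from the old one by the column operation `ξᵢ⁻¹` (a transvection) followed by the column
swap `Pᵢ`, i.e. `g′ = g ξᵢ⁻¹ Pᵢ`; the formula for `a′` is the corresponding change of basis.
-/

namespace Matrix

section PseudoReflection

variable {K ι : Type*} [Field K] [Fintype ι] [DecidableEq ι]

theorem inv_one_add_vecMulVec {e α : ι → K} (h : 1 + α ⬝ᵥ e ≠ 0) :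
    (1 + vecMulVec e α)⁻¹ = 1 - (1 + α ⬝ᵥ e)⁻¹ • vecMulVec e α := by
  apply inv_eq_right_inv
  have hsq : vecMulVec e α * vecMulVec e α = (α ⬝ᵥ e) • vecMulVec e α := by
    rw [vecMulVec_mul_vecMulVec, vecMulVec_smul]
  have hcoeff : (1 + α ⬝ᵥ e)⁻¹ * (α ⬝ᵥ e) = 1 - (1 + α ⬝ᵥ e)⁻¹ := by
    field_simp
    ring
  rw [mul_sub, mul_one, add_mul, one_mul, mul_smul_comm, hsq, smul_smul, hcoeff, sub_smul,
    one_smul]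
  abel

theorem inv_one_add_vecMulVec_mulVec {e α : ι → K} (h : 1 + α ⬝ᵥ e ≠ 0) (x : ι → K) :
    (1 + vecMulVec e α)⁻¹ *ᵥ x = x - ((α ⬝ᵥ x) / (1 + α ⬝ᵥ e)) • e := by
  rw [inv_one_add_vecMulVec h, sub_mulVec, one_mulVec, smul_mulVec, vecMulVec_mulVec,
    op_smul_eq_smul, smul_smul, div_eq_inv_mul]

end PseudoReflection

section ColumnOperations

variable {R ι ι' : Type*} [CommRing R] [Fintype ι] [DecidableEq ι]

theorem inv_transvection {i j : ι} (hij : i ≠ j) (c : R) :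
    (transvection i j c)⁻¹ = transvection i j (-c) :=
  inv_eq_right_inv <| by
    rw [transvection_mul_transvection_same _ _ hij, add_neg_cancel, transvection_zero]

theorem eq_mul_transvection_mul_swap_of_cols {M N : Matrix ι' ι R} {i j : ι} (hij : i ≠ j)
    (c : R) (hi : ∀ a, N a i = M a j + c * M a i) (hj : ∀ a, N a j = M a i)
    (hk : ∀ a k, k ≠ i → k ≠ j → N a k = M a k) :
    N = M * transvection i j c * swap R i j := by
  ext a k
  rcases eq_or_ne k i with rfl | hki
  · rw [mul_swap_apply_left, mul_transvection_apply_same, hi]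
  rcases eq_or_ne k j with rfl | hkj
  · rw [mul_swap_apply_right, mul_transvection_apply_of_ne _ _ _ _ hij, hj]
  · rw [mul_swap_of_ne hki hkj, mul_transvection_apply_of_ne _ _ _ _ hkj, hk a k hki hkj]

end ColumnOperations

end Matrix

theorem stmt12_general (n : ℕ) (e a e' : Fin n → Fin n → ℂ)
    (i i1 : Fin n) (hi : (i1 : ℕ) = (i : ℕ) + 1)
    (ht : ∀ j, 1 + a j ⬝ᵥ e j ≠ 0)
    (r : Fin n → Matrix (Fin n) (Fin n) ℂ)
    (hr : ∀ j, r j = 1 + vecMulVec (e j) (a j))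
    (he' : ∀ k, k ≠ i → k ≠ i1 → e' k = e k)
    (he'i : e' i = (r i)⁻¹ *ᵥ e i1)
    (he'i1 : e' i1 = e i)
    (g g' P xi : Matrix (Fin n) (Fin n) ℂ)
    (hg : ∀ j k, g j k = e k j)
    (hg' : ∀ j k, g' j k = e' k j)
    (hP : ∀ j k, P j k = if k = Equiv.swap i i1 j then 1 else 0)
    (hxi : xi = 1 + Matrix.single i i1 ((a i ⬝ᵥ e i1) / (1 + a i ⬝ᵥ e i))) :
    g' = g * xi⁻¹ * P ∧
    g'⁻¹ * (List.ofFn r).reverse.prod * g' =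
      P * xi * (g⁻¹ * (List.ofFn r).reverse.prod * g) * xi⁻¹ * P := by
  have hne : i ≠ i1 := fun h => by rw [h] at hi; omega
  set c := (a i ⬝ᵥ e i1) / (1 + a i ⬝ᵥ e i)
  have hxi_inv : xi⁻¹ = transvection i i1 (-c) := hxi ▸ inv_transvection hne c
  have hP_swap : P = swap ℂ i i1 := by
    ext j k
    simp [hP, swap, PEquiv.toMatrix_apply, eq_comm]
  have he'i_eq : e' i = e i1 - c • e i := by
    rw [he'i, hr, inv_one_add_vecMulVec_mulVec (ht i)]
  have hg'_eq : g' = g * xi⁻¹ * P := by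
    rw [hxi_inv, hP_swap]
    refine eq_mul_transvection_mul_swap_of_cols hne (-c) (fun j => ?_) (fun j => ?_)
      (fun j k hki hki1 => ?_)
    · simp [hg, hg', he'i_eq, sub_eq_add_neg]
    · rw [hg', hg, he'i1]
    · rw [hg', hg, he' k hki hki1]
  refine ⟨hg'_eq, ?_⟩
  have hxi_inv_inv : xi⁻¹⁻¹ = xi := by
    rw [hxi_inv, inv_transvection hne, neg_neg, hxi]; rfl
  have hP_inv : P⁻¹ = P := inv_eq_right_inv (hP_swap ▸ swap_mul_self i i1)
  rw [hg'_eq, Matrix.mul_inv_rev, Matrix.mul_inv_rev, hP_inv, hxi_inv_inv]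
  simp only [Matrix.mul_assoc]

/-- The braid group generator `γᵢ` acts on the matrix `a = g⁻¹(r_n⋯r₁)g` of the
(fixed) product of pseudo-reflections in the moving basis by
`a ↦ Pᵢ ξᵢ a ξᵢ⁻¹ Pᵢ`, where `Pᵢ` is the permutation matrix of `(i,i+1)` and
`ξᵢ` the elementary unipotent matrix with entry `uᵢ,ᵢ₊₁/tᵢ²`; moreover the new
basis matrix is `g′ = g ξᵢ⁻¹ Pᵢ`.  Here `i, i1` play the roles of `i, i+1` and
`(List.ofFn r).reverse.prod = r_n ⋯ r₁`. -/
theorem stmt12 (n : ℕ) (e a e' a' : Fin n → Fin n → ℂ)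
    (he : LinearIndependent ℂ e)
    (i i1 : Fin n) (hi : (i1 : ℕ) = (i : ℕ) + 1)
    (ht : ∀ j, 1 + a j ⬝ᵥ e j ≠ 0)
    (r : Fin n → Matrix (Fin n) (Fin n) ℂ)
    (hr : ∀ j, r j = 1 + vecMulVec (e j) (a j))
    (he' : ∀ k, k ≠ i → k ≠ i1 → e' k = e k)
    (ha' : ∀ k, k ≠ i → k ≠ i1 → a' k = a k)
    (he'i : e' i = (r i)⁻¹ *ᵥ e i1)
    (he'i1 : e' i1 = e i)
    (ha'i : a' i = a i1 ᵥ* r i)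
    (ha'i1 : a' i1 = a i)
    (g g' P xi : Matrix (Fin n) (Fin n) ℂ)
    (hg : ∀ j k, g j k = e k j)
    (hg' : ∀ j k, g' j k = e' k j)
    (hP : ∀ j k, P j k = if k = Equiv.swap i i1 j then 1 else 0)
    (hxi : xi = 1 + Matrix.single i i1 ((a i ⬝ᵥ e i1) / (1 + a i ⬝ᵥ e i))) :
    g' = g * xi⁻¹ * P ∧
    g'⁻¹ * (List.ofFn r).reverse.prod * g' =
      P * xi * (g⁻¹ * (List.ofFn r).reverse.prod * g) * xi⁻¹ * P :=
  stmt12_general n e a e' i i1 hi ht r hr he' he'i he'i1 g g' P xi hg hg' hP hxi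
end

section
/- (i) The identity 4·cos(2π/7)·cos(4π/7) + 4·cos²(2π/7) = 1 holds in ℝ. (ii) Define b₁, b₂ : ℤ³ → ℤ³ by b₁(x,y,z) := (1 − z − xy, y, x) and b₂(x,y,z) := (x, z, 1 − y − zx), and let S := {(0,0,0), (0,0,1), (0,1,0), (0,1,1), (1,0,0), (1,0,1), (1,1,0)}. Then S is invariant under both b₁ and b₂, and every element of S is obtained from (0,0,0) by finitely many applications of b₁ and b₂; in particular the orbit of (0,0,0) under the group generated by b₁ and b₂ has exactly 7 elements. -/
/-!
Part (i) reduces, by the product-to-sum formulas, to `cos (2π/7) + cos (4π/7) + cos (6π/7) = -1/2`;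
multiplying that sum by `2 sin (π/7)` telescopes to `sin π - sin (π/7) = -sin (π/7)`.
Part (ii) is a finite computation on the seven triples.
-/

/-- The reduced braid move `b₁(x,y,z) = (1 − z − xy, y, x)` on integer triples. -/
def kleinB1 (p : ℤ × ℤ × ℤ) : ℤ × ℤ × ℤ :=
  (1 - p.2.2 - p.1 * p.2.1, p.2.1, p.1)

/-- The reduced braid move `b₂(x,y,z) = (x, z, 1 − y − zx)` on integer triples. -/
def kleinB2 (p : ℤ × ℤ × ℤ) : ℤ × ℤ × ℤ :=
  (p.1, p.2.2, 1 - p.2.1 - p.2.2 * p.1)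

/-- The seven-element set of branches of the Klein solution. -/
def kleinS : Finset (ℤ × ℤ × ℤ) :=
  {(0,0,0), (0,0,1), (0,1,0), (0,1,1), (1,0,0), (1,0,1), (1,1,0)}

namespace Real

theorem two_mul_sin_mul_cos_add_cos_add_cos (θ : ℝ) :
    2 * sin θ * (cos (2 * θ) + cos (4 * θ) + cos (6 * θ)) = sin (7 * θ) - sin θ := by
  have telescope (k : ℝ) : 2 * sin θ * cos ((k + 1) * θ) = sin ((k + 2) * θ) - sin (k * θ) := by
    rw [sin_sub_sin]; ring_nf
  have h2 := telescope 1
  have h4 := telescope 3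
  have h6 := telescope 5
  norm_num at h2 h4 h6
  linear_combination h2 + h4 + h6

theorem four_mul_cos_mul_cos_two_mul_add_four_mul_cos_sq (x : ℝ) :
    4 * cos x * cos (2 * x) + 4 * cos x ^ 2 = 2 + 2 * (cos x + cos (2 * x) + cos (3 * x)) := by
  have hprod : 2 * cos x * cos (2 * x) = cos (3 * x) + cos x := by
    rw [cos_add_cos]; ring_nf
  linear_combination 2 * hprod + 4 * cos_sq x

theorem cos_two_pi_div_seven_add_cos_four_pi_div_seven_add_cos_six_pi_div_seven :
    cos (2 * π / 7) + cos (4 * π / 7) + cos (6 * π / 7) = -1 / 2 := by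
  have hsin : sin (π / 7) ≠ 0 := (sin_pos_of_pos_of_lt_pi (by positivity) (by linarith [pi_pos])).ne'
  have h := two_mul_sin_mul_cos_add_cos_add_cos (π / 7)
  rw [show 7 * (π / 7) = π by ring, sin_pi] at h
  simp only [← mul_div_assoc] at h
  apply mul_left_cancel₀ hsin
  linear_combination (1 / 2 : ℝ) * h

end Real

theorem kleinS_mapsTo : ∀ v ∈ kleinS, kleinB1 v ∈ kleinS ∧ kleinB2 v ∈ kleinS := by
  decide

theorem exists_word_eq_of_mem_kleinS :
    ∀ v ∈ kleinS, ∃ l : List (ℤ × ℤ × ℤ → ℤ × ℤ × ℤ),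
      (∀ f ∈ l, f = kleinB1 ∨ f = kleinB2) ∧ l.foldl (fun x f => f x) (0, 0, 0) = v := by
  intro v hv
  fin_cases hv
  · exact ⟨[], by simp, rfl⟩
  · exact ⟨[kleinB2], by simp, by decide⟩
  · exact ⟨[kleinB2, kleinB2, kleinB1], by simp, by decide⟩
  · exact ⟨[kleinB2, kleinB2], by simp, by decide⟩
  · exact ⟨[kleinB1], by simp, by decide⟩
  · exact ⟨[kleinB1, kleinB1], by simp, by decide⟩
  · exact ⟨[kleinB1, kleinB1, kleinB2], by simp, by decide⟩

/-- (i) `4cos(2π/7)cos(4π/7) + 4cos²(2π/7) = 1`; (ii) the seven-element set `S`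
is invariant under `b₁, b₂`, every element of `S` is reachable from `(0,0,0)` by
finitely many applications of `b₁` and `b₂`, and `S` has exactly 7 elements: the
orbit of `(0,0,0)` under the group generated by `b₁, b₂` has exactly 7 elements. -/
theorem stmt16 :
    (4 * Real.cos (2 * Real.pi / 7) * Real.cos (4 * Real.pi / 7)
        + 4 * Real.cos (2 * Real.pi / 7) ^ 2 = 1) ∧
    (∀ v ∈ kleinS, kleinB1 v ∈ kleinS ∧ kleinB2 v ∈ kleinS) ∧
    (∀ v ∈ kleinS, ∃ l : List (ℤ × ℤ × ℤ → ℤ × ℤ × ℤ),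
      (∀ f ∈ l, f = kleinB1 ∨ f = kleinB2) ∧
      l.foldl (fun x f => f x) (0, 0, 0) = v) ∧
    kleinS.card = 7 := by
  refine ⟨?_, kleinS_mapsTo, exists_word_eq_of_mem_kleinS, rfl⟩
  have h := Real.four_mul_cos_mul_cos_two_mul_add_four_mul_cos_sq (2 * Real.pi / 7)
  rw [show 2 * (2 * Real.pi / 7) = 4 * Real.pi / 7 by ring,
    show 3 * (2 * Real.pi / 7) = 6 * Real.pi / 7 by ring,
    Real.cos_two_pi_div_seven_add_cos_four_pi_div_seven_add_cos_six_pi_div_seven] at h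
  linarith
end

section
/- Let φ := exp(2πi/7) ∈ ℂ and τ := −(1+φ²)(φ+φ⁴+φ⁶). If ε ∈ ℂ satisfies ε² − τε + 1 = 0 (equivalently ε ≠ 0 and ε + ε⁻¹ = τ), then ε is not a root of unity: εᴺ ≠ 1 for every positive integer N. -/
/-!
`τ` is a root of the irreducible cubic `X³ - 3X² - 4X - 1`, which also has a real root
`r ≥ 4`. If `ε` were a root of unity, an embedding of `ℚ(τ, ε)` into `ℂ` sending `τ` to `r`
would send `ε` to a root of unity `e` with `r = e + e⁻¹`, forcing `|r| ≤ 2`.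
-/

open Polynomial

theorem IsIntegral.of_pow_eq_one {R B : Type*} [CommRing R] [Ring B] [Algebra R B] {x : B}
    {N : ℕ} (hN : N ≠ 0) (hx : x ^ N = 1) : IsIntegral R x :=
  IsIntegral.of_pow (Nat.pos_of_ne_zero hN) (hx ▸ isIntegral_one)

theorem exists_pow_eq_one_of_aeval_minpoly {K L : Type*} [Field K] [Field L] [Algebra K L]
    [IsAlgClosed L] {t e t' : L} {N : ℕ} (hN : N ≠ 0)
    (he : e ^ 2 - t * e + 1 = 0) (hpow : e ^ N = 1) (ht' : aeval t' (minpoly K t) = 0) :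
    ∃ e' : L, e' ^ 2 - t' * e' + 1 = 0 ∧ e' ^ N = 1 := by
  have he0 : e ≠ 0 := by rintro rfl; simp at he
  have he_int : IsIntegral K e := .of_pow_eq_one hN hpow
  have ht_int : IsIntegral K t := by
    have : t = e + e⁻¹ := by field_simp; linear_combination -he
    rw [this]
    exact he_int.add (.of_pow_eq_one hN (by rw [inv_pow, hpow, inv_one]))
  have hte : ∀ s ∈ ({t, e} : Set L),
      IsIntegral K s ∧ ((minpoly K s).map (algebraMap K L)).Splits := by
    rintro s (rfl | rfl) <;> exact ⟨‹_›, IsAlgClosed.splits _⟩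
  let E := IntermediateField.adjoin K ({t, e} : Set L)
  have htE : t ∈ E := IntermediateField.subset_adjoin K _ (by simp)
  have heE : e ∈ E := IntermediateField.subset_adjoin K _ (by simp)
  obtain ⟨ψ, hψ⟩ := IntermediateField.exists_algHom_adjoin_of_splits_of_aeval hte htE ht'
  refine ⟨ψ ⟨e, heE⟩, ?_, ?_⟩
  · have h : (⟨e, heE⟩ : E) ^ 2 - ⟨t, htE⟩ * ⟨e, heE⟩ + 1 = 0 := Subtype.ext he
    simpa only [map_add, map_sub, map_mul, map_pow, map_one, map_zero, hψ] using congrArg ψ h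
  · rw [← map_pow, show (⟨e, heE⟩ : E) ^ N = 1 from Subtype.ext hpow, map_one]

theorem norm_le_two_of_sq_sub_mul_add_one_eq_zero {𝕜 : Type*} [NormedField 𝕜] {t e : 𝕜}
    (he : e ^ 2 - t * e + 1 = 0) (hnorm : ‖e‖ = 1) : ‖t‖ ≤ 2 := by
  have he0 : e ≠ 0 := norm_ne_zero_iff.mp (by rw [hnorm]; exact one_ne_zero)
  have : t = e + e⁻¹ := by field_simp; linear_combination -he
  calc ‖t‖ ≤ ‖e‖ + ‖e⁻¹‖ := this ▸ norm_add_le _ _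
    _ = 2 := by rw [norm_inv, hnorm]; norm_num

theorem Complex.norm_le_two_of_aeval_minpoly {K : Type*} [Field K] [Algebra K ℂ] {t e t' : ℂ}
    {N : ℕ} (hN : N ≠ 0) (he : e ^ 2 - t * e + 1 = 0) (hpow : e ^ N = 1)
    (ht' : aeval t' (minpoly K t) = 0) : ‖t'‖ ≤ 2 := by
  obtain ⟨e', he', hpow'⟩ := exists_pow_eq_one_of_aeval_minpoly hN he hpow ht'
  exact norm_le_two_of_sq_sub_mul_add_one_eq_zero he' (Complex.norm_eq_one_of_pow_eq_one hpow' hN)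

noncomputable def tauCubic : ℤ[X] := X ^ 3 - 3 * X ^ 2 - 4 * X - 1

lemma tauCubic_monic : tauCubic.Monic := by
  unfold tauCubic
  monicity!

lemma tauCubic_irreducible : Irreducible tauCubic := by
  refine tauCubic_monic.irreducible_of_irreducible_map (Int.castRingHom (ZMod 2)) _
    (irreducible_of_degree_le_three_of_not_isRoot ?_ ?_)
  · have : (tauCubic.map (Int.castRingHom (ZMod 2))).natDegree = 3 := by
      rw [tauCubic_monic.natDegree_map]; unfold tauCubic; compute_degree!
    simp [this]
  · simp only [tauCubic, Polynomial.map_sub, Polynomial.map_mul, Polynomial.map_pow, map_X,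
      Polynomial.map_ofNat, Polynomial.map_one, IsRoot, eval_sub, eval_mul, eval_pow, eval_X,
      eval_one, eval_ofNat]
    decide

lemma aeval_tauCubic {A : Type*} [CommRing A] (x : A) :
    aeval x tauCubic = x ^ 3 - 3 * x ^ 2 - 4 * x - 1 := by
  simp only [tauCubic, map_sub, map_mul, map_pow, aeval_X, map_ofNat, map_one]

lemma exists_root_tauCubic_ge_four : ∃ r : ℝ, 4 ≤ r ∧ aeval r tauCubic = 0 := by
  have hcont : ContinuousOn (fun x : ℝ => aeval x tauCubic) (Set.Icc 4 5) :=
    (Polynomial.continuous_aeval _).continuousOn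
  obtain ⟨r, hr, hr0⟩ := intermediate_value_Icc (by norm_num : (4:ℝ) ≤ 5) hcont
    (show (0 : ℝ) ∈ Set.Icc _ _ by simp only [aeval_tauCubic]; norm_num)
  exact ⟨r, hr.1, hr0⟩

lemma aeval_tauCubic_of_isPrimitiveRoot {φ : ℂ} (hφ : IsPrimitiveRoot φ 7) :
    aeval (-((1 + φ ^ 2) * (φ + φ ^ 4 + φ ^ 6))) tauCubic = 0 := by
  have hs := hφ.geom_sum_eq_zero (by norm_num)
  simp only [Finset.sum_range_succ, Finset.sum_range_zero] at hs
  rw [aeval_tauCubic]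
  -- the cofactor is the quotient of the cubic evaluated at `τ(φ)` by `1 + φ + ⋯ + φ⁶`
  linear_combination (-1 + 5*φ - 7*φ^2 + 6*φ^3 - 5*φ^4 - 7*φ^5 + 11*φ^6 - 24*φ^7 + 15*φ^8
    - 18*φ^9 - 2*φ^10 + 4*φ^11 - 17*φ^12 + 12*φ^13 - 15*φ^14 + 6*φ^15 - 6*φ^16 + φ^17
    - φ^18) * hs

lemma minpoly_eq_tauCubic {A : Type*} [Field A] [Algebra ℚ A] {x : A}
    (hx : aeval x tauCubic = 0) : minpoly ℚ x = tauCubic.map (Int.castRingHom ℚ) := by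
  refine (minpoly.eq_of_irreducible_of_monic ?_ ?_ (tauCubic_monic.map _)).symm
  · exact (IsPrimitive.Int.irreducible_iff_irreducible_map_cast tauCubic_monic.isPrimitive).mp
      tauCubic_irreducible
  · rwa [← algebraMap_int_eq, aeval_map_algebraMap]

/-- Let `φ = exp(2πi/7)` and `τ = −(1+φ²)(φ+φ⁴+φ⁶)`.  Any `ε ∈ ℂ` with
`ε² − τε + 1 = 0` is not a root of unity. -/
theorem stmt19 (φ τ ε : ℂ)
    (hφ : φ = Complex.exp (2 * (Real.pi : ℂ) * Complex.I / 7))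
    (hτ : τ = -((1 + φ^2) * (φ + φ^4 + φ^6)))
    (hε : ε^2 - τ * ε + 1 = 0) :
    ∀ N : ℕ, 0 < N → ε^N ≠ 1 := by
  intro N hN hεN
  have hφ7 : IsPrimitiveRoot φ 7 := by
    simpa [hφ] using Complex.isPrimitiveRoot_exp 7 (by norm_num)
  have hminpoly := minpoly_eq_tauCubic (hτ ▸ aeval_tauCubic_of_isPrimitiveRoot hφ7)
  obtain ⟨r, hr4, hr⟩ := exists_root_tauCubic_ge_four
  have hr' : aeval (r : ℂ) (minpoly ℚ τ) = 0 := by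
    rw [hminpoly, ← algebraMap_int_eq, aeval_map_algebraMap, ← Complex.coe_algebraMap,
      aeval_algebraMap_apply, hr, map_zero]
  have := Complex.norm_le_two_of_aeval_minpoly hN.ne' hε hεN hr'
  rw [Complex.norm_real, Real.norm_eq_abs] at this
  linarith [le_abs_self r]
end
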